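/- arXiv:0808.2274 — 4 statements merged into one kernel-verified Lean document; each statement's English description precedes it below -/
import Mathlib

section
/- Let C, ε > 0 and let f : (-ε, 1+ε) → ℝ be a non-constant real analytic function such that f'(s)² ≤ C·f''(s) for all s ∈ [0,1]. Then f is strictly convex on (0,1). -/
/-!
Since `C > 0`, the hypothesis gives `f'' ≥ 0` on `[0, 1]`, so `f'` is monotone there. If `f'` took
the same value at two points of `(0, 1)`, then `f''` would vanish on the interval between them, and
hence, being analytic, on all of `(-ε, 1 + ε)`. But then `f'` is constant, and it vanishes at `0`
because `f'(0)² ≤ C f''(0) = 0`; so `f` would be constant. Thus `f'` is strictly increasing on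
`(0, 1)`, which makes `f` strictly convex there.
-/

open Set

theorem exists_const_of_deriv_deriv_eqOn_zero {𝕜 E : Type*} [RCLike 𝕜] [NormedAddCommGroup E]
    [NormedSpace 𝕜 E] {f : 𝕜 → E} {U : Set 𝕜} (hU : IsOpen U) (hU' : IsPreconnected U)
    (hf : DifferentiableOn 𝕜 f U) (hf' : DifferentiableOn 𝕜 (deriv f) U)
    (hf'' : EqOn (deriv (deriv f)) 0 U) {a : 𝕜} (ha : a ∈ U) (hfa : deriv f a = 0) :
    ∃ c, ∀ x ∈ U, f x = c :=
  hU.exists_is_const_of_deriv_eq_zero hU' hf fun _ hx ↦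
    (hU.is_const_of_deriv_eq_zero hU' hf' hf'' hx ha).trans hfa

namespace AnalyticOnNhd

variable {g : ℝ → ℝ} {U : Set ℝ}

theorem deriv_eqOn_zero_of_eqOn_Ioo (hg : AnalyticOnNhd ℝ g U) (hU : IsPreconnected U)
    {x y c : ℝ} (hxy : x < y) (hxyU : Ioo x y ⊆ U) (hc : EqOn g (fun _ ↦ c) (Ioo x y)) :
    EqOn (deriv g) 0 U := by
  have hmid : (x + y) / 2 ∈ Ioo x y := ⟨by linarith, by linarith⟩
  refine hg.deriv.eqOn_zero_of_preconnected_of_eventuallyEq_zero hU (hxyU hmid) ?_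
  filter_upwards [Ioo_mem_nhds hmid.1 hmid.2] with z hz
  rw [(hc.eventuallyEq_of_mem (Ioo_mem_nhds hz.1 hz.2)).deriv_eq, deriv_const, Pi.zero_apply]

theorem strictMonoOn_of_deriv_nonneg (hg : AnalyticOnNhd ℝ g U) (hU : IsPreconnected U)
    {D : Set ℝ} (hD : Convex ℝ D) (hDU : D ⊆ U) (hg' : ∀ x ∈ interior D, 0 ≤ deriv g x)
    (hne : ¬ EqOn (deriv g) 0 U) : StrictMonoOn g D := by
  have hmono : MonotoneOn g D := monotoneOn_of_deriv_nonneg hD (hg.continuousOn.mono hDU)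
    (hg.differentiableOn.mono (interior_subset.trans hDU)) hg'
  intro x hx y hy hxy
  refine (hmono hx hy hxy.le).lt_of_ne fun hgxy ↦ hne ?_
  have hIcc : Icc x y ⊆ D := hD.ordConnected.out hx hy
  refine hg.deriv_eqOn_zero_of_eqOn_Ioo hU hxy (Ioo_subset_Icc_self.trans (hIcc.trans hDU))
    fun z hz ↦ le_antisymm ?_ (hmono hx (hIcc (Ioo_subset_Icc_self hz)) hz.1.le)
  exact hgxy ▸ hmono (hIcc (Ioo_subset_Icc_self hz)) hy hz.2.le

end AnalyticOnNhd

theorem strictly_convex_of_deriv_sq_le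
    (C ε : ℝ) (hC : 0 < C) (hε : 0 < ε) (f : ℝ → ℝ)
    (hf : AnalyticOn ℝ f (Ioo (-ε) (1 + ε)))
    (hnc : ¬ ∃ c : ℝ, ∀ s ∈ Ioo (-ε) (1 + ε), f s = c)
    (hineq : ∀ s ∈ Icc (0 : ℝ) 1, (deriv f s) ^ 2 ≤ C * deriv (deriv f) s) :
    StrictConvexOn ℝ (Ioo (0 : ℝ) 1) f := by
  have hfU : AnalyticOnNhd ℝ f (Ioo (-ε) (1 + ε)) := isOpen_Ioo.analyticOn_iff_analyticOnNhd.1 hf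
  have hsub : Icc (0 : ℝ) 1 ⊆ Ioo (-ε) (1 + ε) := Icc_subset_Ioo (by linarith) (by linarith)
  have hf''_nonneg (s : ℝ) (hs : s ∈ Icc (0 : ℝ) 1) : 0 ≤ deriv (deriv f) s :=
    nonneg_of_mul_nonneg_right ((sq_nonneg _).trans (hineq s hs)) hC
  have hf''_ne : ¬ EqOn (deriv (deriv f)) 0 (Ioo (-ε) (1 + ε)) := by
    intro h0
    have h0mem : (0 : ℝ) ∈ Icc (0 : ℝ) 1 := left_mem_Icc.2 zero_le_one
    have hf'0 : deriv f 0 = 0 := by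
      simpa [h0 (hsub h0mem)] using hineq 0 h0mem
    exact hnc (exists_const_of_deriv_deriv_eqOn_zero isOpen_Ioo isPreconnected_Ioo
      hfU.differentiableOn hfU.deriv.differentiableOn h0 (hsub h0mem) hf'0)
  have hf'_strictMono : StrictMonoOn (deriv f) (Ioo (0 : ℝ) 1) :=
    hfU.deriv.strictMonoOn_of_deriv_nonneg isPreconnected_Ioo (convex_Ioo 0 1)
      (Ioo_subset_Icc_self.trans hsub)
      (fun s hs ↦ hf''_nonneg s (Ioo_subset_Icc_self (interior_subset hs))) hf''_ne
  refine StrictMonoOn.strictConvexOn_of_deriv (convex_Ioo 0 1)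
    (hfU.continuousOn.mono (Ioo_subset_Icc_self.trans hsub)) ?_
  rwa [interior_Ioo]
end

section
/- For a,b in a Banach algebra, e^{a+b} - e^a = ∫₀¹ e^{(1-t)a} b e^{t(a+b)} dt. -/
/-! Duhamel's formula: the path `t ↦ e^{(1-t)a} e^{t(a+b)}` runs from `e^a` to `e^{a+b}`. Since `a`
commutes with `e^{(1-t)a}`, its derivative is `e^{(1-t)a} (-a + (a + b)) e^{t(a+b)} =
e^{(1-t)a} b e^{t(a+b)}`, and the fundamental theorem of calculus gives the formula. -/

open NormedSpace intervalIntegral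

section

variable {A : Type*} [NormedRing A] [NormedAlgebra ℝ A] [CompleteSpace A]

theorem hasDerivAt_exp_one_sub_smul (a : A) (t : ℝ) :
    HasDerivAt (fun s : ℝ => exp ((1 - s) • a)) (-(exp ((1 - t) • a) * a)) t := by
  have := (hasDerivAt_exp_smul_const a (1 - t)).scomp t ((hasDerivAt_id t).const_sub 1)
  simpa [Function.comp_def] using this

theorem hasDerivAt_exp_one_sub_smul_mul_exp_smul (a c : A) (t : ℝ) :
    HasDerivAt (fun s : ℝ => exp ((1 - s) • a) * exp (s • c))
      (exp ((1 - t) • a) * (c - a) * exp (t • c)) t := by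
  refine ((hasDerivAt_exp_one_sub_smul a t).mul (hasDerivAt_exp_smul_const' c t)).congr_deriv ?_
  rw [mul_sub, sub_mul, neg_mul, mul_assoc, mul_assoc]
  abel

theorem integral_exp_one_sub_smul_mul_sub_mul_exp_smul (a c : A) :
    ∫ t in (0 : ℝ)..1, exp ((1 - t) • a) * (c - a) * exp (t • c) = exp c - exp a := by
  have hcont : Continuous fun t : ℝ => exp ((1 - t) • a) * (c - a) * exp (t • c) :=
    (((differentiable_exp_smul_const ℝ a).continuous.comp (continuous_const.sub continuous_id)).mul
      continuous_const).mul (differentiable_exp_smul_const ℝ c).continuous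
  rw [integral_eq_sub_of_hasDerivAt (fun t _ => hasDerivAt_exp_one_sub_smul_mul_exp_smul a c t)
    (hcont.intervalIntegrable 0 1)]
  simp

end

theorem exp_sub_exp_eq_integral
    {A : Type*} [NormedRing A] [NormedAlgebra ℝ A] [CompleteSpace A] (a b : A) :
    exp (a + b) - exp a =
      ∫ t in (0 : ℝ)..1, exp ((1 - t) • a) * b * exp (t • (a + b)) := by
  simpa using (integral_exp_one_sub_smul_mul_sub_mul_exp_smul a (a + b)).symm
end

section
/- Let a be an element of a unital Banach algebra with ‖a‖ < π, and let ad a : x ↦ xa - ax. Then the operator F(ad a), where F(z) = (e^z - 1)/z = Σ_{n≥0} z^n/(n+1)!, is invertible as a bounded operator on the algebra. -/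
/-!
The Bernoulli generating function `z / (e^z - 1) = ∑ Bₙ zⁿ / n!` is the reciprocal of
`F(z) = (e^z - 1) / z`, and its coefficients satisfy `|Bₙ / n!| ≤ 4 / (2π)ⁿ` because
`B₂ₖ / (2k)!` is, up to sign, `2 ζ(2k) / (2π)^(2k)`. Hence both series converge absolutely at
any element `T` of a real Banach algebra with `‖T‖ < 2π`, and their Cauchy product is `1`.
Since `‖ad a‖ ≤ 2‖a‖ < 2π`, this applies to `T = ad a`.
-/

open ContinuousLinearMap Finset Real

theorem bernoulliPowerSeries_mul_mk_inv_factorial_succ :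
    bernoulliPowerSeries ℝ * PowerSeries.mk (fun n => ((n + 1).factorial : ℝ)⁻¹) = 1 := by
  open PowerSeries in
  have hexp : exp ℝ - 1 = X * PowerSeries.mk (fun n => ((n + 1).factorial : ℝ)⁻¹) := by
    ext (_ | n) <;> simp [coeff_exp, coeff_succ_X_mul]
  apply mul_left_cancel₀ (PowerSeries.X_ne_zero (R := ℝ))
  rw [mul_one, mul_left_comm, ← hexp, bernoulliPowerSeries_mul_exp_sub_one]

theorem sum_antidiagonal_bernoulli_div_factorial_mul_inv_factorial_succ (n : ℕ) :
    ∑ p ∈ antidiagonal n, (bernoulli p.1 / p.1.factorial : ℝ) * ((p.2 + 1).factorial : ℝ)⁻¹ =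
      if n = 0 then 1 else 0 := by
  simpa [PowerSeries.coeff_mul, bernoulliPowerSeries, PowerSeries.coeff_one] using
    congrArg (PowerSeries.coeff n) bernoulliPowerSeries_mul_mk_inv_factorial_succ

theorem le_two_of_hasSum_one_div_nat_pow {k : ℕ} (hk : 2 ≤ k) {v : ℝ}
    (hv : HasSum (fun n : ℕ => 1 / (n : ℝ) ^ k) v) : v ≤ 2 := by
  have hle : ∀ n : ℕ, 1 / (n : ℝ) ^ k ≤ 1 / (n : ℝ) ^ 2 := by
    intro n
    rcases n.eq_zero_or_pos with rfl | hn
    · simp [zero_pow (by omega : k ≠ 0)]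
    · gcongr
      exact_mod_cast hn
  nlinarith [hasSum_le hle hv hasSum_zeta_two, pi_lt_d2, pi_pos]

theorem abs_bernoulli_two_mul_div_factorial_le {k : ℕ} (hk : k ≠ 0) :
    |(bernoulli (2 * k) : ℝ) / (2 * k).factorial| ≤ 4 / (2 * π) ^ (2 * k) := by
  have hζ := hasSum_zeta_nat hk
  set v := (-1 : ℝ) ^ (k + 1) * 2 ^ (2 * k - 1) * π ^ (2 * k) * bernoulli (2 * k) /
    (2 * k).factorial
  have hv_le : v ≤ 2 := le_two_of_hasSum_one_div_nat_pow (by omega) hζ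
  have hv_nonneg : 0 ≤ v := hasSum_le (fun n => by positivity) hasSum_zero hζ
  set x := (bernoulli (2 * k) : ℝ) / (2 * k).factorial
  have habs : (2 * π) ^ (2 * k) * |x| = 2 * v := by
    obtain ⟨m, rfl⟩ : ∃ m, k = m + 1 := ⟨k - 1, by omega⟩
    have hv : v = (-1) ^ (m + 2) * (2 ^ (2 * m + 1) * π ^ (2 * m + 2)) * x := by
      simp only [v, x, show 2 * (m + 1) - 1 = 2 * m + 1 by omega]
      ring
    rw [← abs_of_nonneg hv_nonneg, hv, abs_mul, abs_mul, abs_neg_one_pow, one_mul,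
      abs_of_pos (by positivity : (0 : ℝ) < 2 ^ (2 * m + 1) * π ^ (2 * m + 2))]
    ring
  rw [le_div_iff₀' (by positivity), habs]
  linarith

theorem abs_bernoulli_div_factorial_le (n : ℕ) :
    |(bernoulli n : ℝ) / n.factorial| ≤ 4 / (2 * π) ^ n := by
  rcases n.even_or_odd with ⟨k, rfl⟩ | hodd
  · rcases eq_or_ne k 0 with rfl | hk
    · norm_num
    · rw [← two_mul]
      exact abs_bernoulli_two_mul_div_factorial_le hk
  · rcases eq_or_ne n 1 with rfl | hn
    · rw [bernoulli_one, le_div_iff₀ (by positivity)]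
      norm_num
      linarith [pi_le_four]
    · rw [bernoulli_eq_zero_of_odd hodd (by have := hodd.pos; omega)]
      simp only [Rat.cast_zero, zero_div, abs_zero]
      positivity

theorem summable_abs_bernoulli_div_factorial_mul_pow {r : ℝ} (hr₀ : 0 ≤ r) (hr : r < 2 * π) :
    Summable fun n => |(bernoulli n : ℝ) / n.factorial| * r ^ n := by
  have hq : r / (2 * π) < 1 := (div_lt_one (by positivity)).2 hr
  refine .of_nonneg_of_le (fun n => by positivity) (fun n => ?_)
    ((summable_geometric_of_lt_one (by positivity) hq).mul_left 4)
  calc |(bernoulli n : ℝ) / n.factorial| * r ^ n ≤ 4 / (2 * π) ^ n * r ^ n := by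
        gcongr
        exact abs_bernoulli_div_factorial_le n
    _ = 4 * (r / (2 * π)) ^ n := by rw [div_pow]; ring

theorem summable_abs_inv_factorial_succ_mul_pow {r : ℝ} (hr₀ : 0 ≤ r) :
    Summable fun n => |((n + 1).factorial : ℝ)⁻¹| * r ^ n := by
  refine .of_nonneg_of_le (fun n => by positivity) (fun n => ?_)
    (Real.summable_pow_div_factorial r)
  rw [abs_of_pos (by positivity), inv_mul_eq_div]
  gcongr
  exact n.le_succ

section

variable {R : Type*} [NormedRing R] [NormedAlgebra ℝ R]

theorem summable_norm_smul_pow {c : ℕ → ℝ} (T : R)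
    (hc : Summable fun n => |c n| * ‖T‖ ^ n) : Summable fun n => ‖c n • T ^ n‖ := by
  rw [← summable_nat_add_iff 1] at hc ⊢
  refine .of_nonneg_of_le (fun n => norm_nonneg _) (fun n => ?_) hc
  rw [norm_smul, norm_eq_abs]
  gcongr
  exact norm_pow_le' T n.succ_pos

variable [CompleteSpace R]

theorem tsum_smul_pow_mul_tsum_smul_pow {b c : ℕ → ℝ} (T : R)
    (hb : Summable fun n => ‖b n • T ^ n‖) (hc : Summable fun n => ‖c n • T ^ n‖) :
    (∑' n, b n • T ^ n) * (∑' n, c n • T ^ n) =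
      ∑' n, (∑ p ∈ antidiagonal n, b p.1 * c p.2) • T ^ n := by
  rw [tsum_mul_tsum_eq_tsum_sum_antidiagonal_of_summable_norm hb hc]
  refine tsum_congr fun n => ?_
  rw [sum_smul]
  refine sum_congr rfl fun p hp => ?_
  rw [smul_mul_smul_comm, ← pow_add, mem_antidiagonal.mp hp]

theorem isUnit_tsum_smul_pow {b c : ℕ → ℝ} (T : R)
    (hb : Summable fun n => ‖b n • T ^ n‖) (hc : Summable fun n => ‖c n • T ^ n‖)
    (hbc : ∀ n, ∑ p ∈ antidiagonal n, b p.1 * c p.2 = if n = 0 then 1 else 0) :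
    IsUnit (∑' n, c n • T ^ n) := by
  have hcb : ∀ n, ∑ p ∈ antidiagonal n, c p.1 * b p.2 = if n = 0 then 1 else 0 := fun n => by
    rw [← hbc, ← Nat.sum_antidiagonal_swap]
    simp only [Prod.fst_swap, Prod.snd_swap, mul_comm]
  have hδ : ∑' n : ℕ, (if n = 0 then (1 : ℝ) else 0) • T ^ n = 1 := by
    rw [tsum_eq_single 0 fun n hn => by simp [hn]]
    simp
  refine ⟨⟨∑' n, c n • T ^ n, ∑' n, b n • T ^ n, ?_, ?_⟩, rfl⟩
  · rw [tsum_smul_pow_mul_tsum_smul_pow T hc hb, tsum_congr fun n => by rw [hcb], hδ]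
  · rw [tsum_smul_pow_mul_tsum_smul_pow T hb hc, tsum_congr fun n => by rw [hbc], hδ]

theorem isUnit_tsum_inv_factorial_succ_smul_pow (T : R) (hT : ‖T‖ < 2 * π) :
    IsUnit (∑' n : ℕ, ((n + 1).factorial : ℝ)⁻¹ • T ^ n) :=
  isUnit_tsum_smul_pow T
    (summable_norm_smul_pow T
      (summable_abs_bernoulli_div_factorial_mul_pow (norm_nonneg T) hT))
    (summable_norm_smul_pow T (summable_abs_inv_factorial_succ_mul_pow (norm_nonneg T)))
    sum_antidiagonal_bernoulli_div_factorial_mul_inv_factorial_succ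

end

theorem norm_mul_flip_sub_mul_le {𝕜 A : Type*} [NontriviallyNormedField 𝕜]
    [NonUnitalSeminormedRing A] [NormedSpace 𝕜 A] [IsScalarTower 𝕜 A A] [SMulCommClass 𝕜 A A]
    (a : A) : ‖(mul 𝕜 A).flip a - mul 𝕜 A a‖ ≤ 2 * ‖a‖ := by
  have hflip : ‖(mul 𝕜 A).flip a‖ ≤ ‖a‖ :=
    calc ‖(mul 𝕜 A).flip a‖ ≤ ‖(mul 𝕜 A).flip‖ * ‖a‖ := le_opNorm _ _
      _ ≤ 1 * ‖a‖ := by gcongr; exact (opNorm_flip _).trans_le (opNorm_mul_le 𝕜 A)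
      _ = ‖a‖ := one_mul _
  linarith [norm_sub_le ((mul 𝕜 A).flip a) (mul 𝕜 A a), opNorm_mul_apply_le 𝕜 A a]

theorem F_ad_invertible
    {A : Type*} [NormedRing A] [NormedAlgebra ℂ A] [CompleteSpace A]
    (a : A) (ha : ‖a‖ < Real.pi) :
    IsUnit (∑' n : ℕ, (((n + 1).factorial : ℝ))⁻¹ •
      ((ContinuousLinearMap.mul ℂ A).flip a - ContinuousLinearMap.mul ℂ A a) ^ n) :=
  isUnit_tsum_inv_factorial_succ_smul_pow _ <| by linarith [norm_mul_flip_sub_mul_le (𝕜 := ℂ) a]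
end

section
/- Let A = Σ_{i=1}^n λ_i p_i be a self-adjoint operator with finite spectrum, where λ_i are distinct reals and p_i are pairwise orthogonal projections summing to 1. Then the range of the commutator map δ_A(x) = xA - Ax on skew-hermitian Hilbert–Schmidt operators equals {z ∈ B₂(H)_h : p_i z p_i = 0 for all i}, which is a closed subspace of the hermitian Hilbert–Schmidt operators. Moreover ‖δ_A(x)‖₂ ≥ (min_{i≠j} |λ_i - λ_j|) ‖x - P_A(x)‖₂, where P_A(x) = Σ_i p_i x p_i. -/
/-!
Write operators as block matrices `(p i * x * p j)`. The commutator `x ↦ x * A - A * x` multiplies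
the block `(i, j)` by `λ j - λ i`: it kills the diagonal blocks and, since the `λ i` are distinct,
is inverted on the off-diagonal ones by dividing by `λ j - λ i`; this inverse maps self-adjoint
operators to skew-adjoint ones and keeps the Hilbert–Schmidt class, which is a two-sided ideal.
By Parseval, the squared Hilbert–Schmidt norm is the sum of those of the blocks, which gives the
lower bound by the smallest gap `|λ i - λ j|`. Closedness holds because the Hilbert–Schmidt norm
dominates the operator norm, in which `z ↦ p i * z * p i` is continuous.
-/

open ContinuousLinearMap Finset

variable {ι H : Type*} [NormedAddCommGroup H] [InnerProductSpace ℂ H] [CompleteSpace H]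

/-- Membership in the Hilbert–Schmidt class, along a fixed Hilbert basis. -/
def IsHS (e : HilbertBasis ι ℂ H) (a : H →L[ℂ] H) : Prop :=
  Summable fun i => ((inner ℂ (e i) ((adjoint a * a) (e i)) : ℂ)).re

/-- The Hilbert–Schmidt norm, computed along a fixed Hilbert basis. -/
noncomputable def hsNorm (e : HilbertBasis ι ℂ H) (a : H →L[ℂ] H) : ℝ :=
  Real.sqrt (∑' i, ((inner ℂ (e i) ((adjoint a * a) (e i)) : ℂ)).re)

open scoped ENNReal

namespace CompleteOrthogonalIdempotents

variable {R I : Type*} [Ring R] [Fintype I] {p : I → R}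

theorem sum_sum_mul_mul (hp : CompleteOrthogonalIdempotents p) (x : R) :
    ∑ i, ∑ j, p i * x * p j = x := by
  simp only [← Finset.mul_sum, ← Finset.sum_mul, hp.complete, mul_one, one_mul]

theorem ext_blocks (hp : CompleteOrthogonalIdempotents p) {x y : R}
    (h : ∀ i j, p i * x * p j = p i * y * p j) : x = y := by
  rw [← hp.sum_sum_mul_mul x, ← hp.sum_sum_mul_mul y]
  simp only [h]

variable [DecidableEq I]

theorem mul_mul_mul_mul (hp : CompleteOrthogonalIdempotents p) (x : R) (i j k l : I) :
    p i * (p k * x * p l) * p j = if i = k ∧ l = j then p i * x * p j else 0 := by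
  have hi : p i * (p k * x * p l) * p j = (p i * p k) * x * (p l * p j) := by noncomm_ring
  rw [hi, hp.mul_eq, hp.mul_eq]
  split_ifs <;> simp_all

theorem mul_sum_mul_mul (hp : CompleteOrthogonalIdempotents p) (x : R) (i j : I) :
    p i * (∑ k, p k * x * p k) * p j = if i = j then p i * x * p j else 0 := by
  simp [Finset.mul_sum, Finset.sum_mul, hp.mul_mul_mul_mul, ite_and]

variable {𝕜 : Type*} [Field 𝕜] [Algebra 𝕜 R]

theorem mul_sum_smul_mul (hp : CompleteOrthogonalIdempotents p) (c : I → I → 𝕜) (x : R)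
    (i j : I) : p i * (∑ k, ∑ l, c k l • (p k * x * p l)) * p j = c i j • (p i * x * p j) := by
  simp [Finset.mul_sum, Finset.sum_mul, hp.mul_mul_mul_mul, ite_and]

theorem mul_sum_smul (hp : CompleteOrthogonalIdempotents p) (μ : I → 𝕜) (i : I) :
    p i * ∑ j, μ j • p j = μ i • p i := by
  simp [Finset.mul_sum, hp.mul_eq]

theorem sum_smul_mul (hp : CompleteOrthogonalIdempotents p) (μ : I → 𝕜) (i : I) :
    (∑ j, μ j • p j) * p i = μ i • p i := by
  simp [Finset.sum_mul, hp.mul_eq]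

theorem mul_commutator_mul (hp : CompleteOrthogonalIdempotents p) (μ : I → 𝕜) (x : R) (i j : I) :
    p i * (x * ∑ k, μ k • p k - (∑ k, μ k • p k) * x) * p j = (μ j - μ i) • (p i * x * p j) := by
  rw [mul_sub, sub_mul, ← mul_assoc (p i) x, mul_assoc (p i * x), hp.sum_smul_mul,
    ← mul_assoc (p i), hp.mul_sum_smul, mul_smul_comm, smul_mul_assoc, smul_mul_assoc, sub_smul]

end CompleteOrthogonalIdempotents

section CommutatorInv

variable {R I 𝕜 : Type*} [Ring R] [Fintype I] [Field 𝕜] [Algebra 𝕜 R]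

/-- Only the off-diagonal blocks contribute: the diagonal coefficient is `0⁻¹ = 0`. -/
def commutatorInv (μ : I → 𝕜) (p : I → R) (w : R) : R :=
  ∑ i, ∑ j, (μ j - μ i)⁻¹ • (p i * w * p j)

variable {μ : I → 𝕜} {p : I → R}

theorem commutatorInv_commutator [DecidableEq I] (hp : CompleteOrthogonalIdempotents p)
    (hμ : Function.Injective μ) {w : R} (hw : ∀ i, p i * w * p i = 0) :
    commutatorInv μ p w * ∑ k, μ k • p k - (∑ k, μ k • p k) * commutatorInv μ p w = w := by
  refine hp.ext_blocks fun i j => ?_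
  rw [hp.mul_commutator_mul, commutatorInv, hp.mul_sum_smul_mul, smul_smul]
  obtain rfl | hij := eq_or_ne i j
  · simp [hw]
  · rw [mul_inv_cancel₀ (sub_ne_zero.2 (hμ.ne hij.symm)), one_smul]

theorem star_commutatorInv [StarRing R] [StarRing 𝕜] [StarModule 𝕜 R]
    (hμ : ∀ i, IsSelfAdjoint (μ i)) (hp : ∀ i, IsSelfAdjoint (p i)) {w : R} (hw : IsSelfAdjoint w) :
    star (commutatorInv μ p w) = - commutatorInv μ p w := by
  simp only [commutatorInv, star_sum, star_smul, star_mul, (hp _).star_eq, hw.star_eq, star_inv₀,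
    star_sub, (hμ _).star_eq, mul_assoc]
  rw [Finset.sum_comm]
  simp only [← Finset.sum_neg_distrib, ← neg_smul, ← inv_neg, neg_sub]

end CommutatorInv

theorem isSelfAdjoint_mul_sub_mul {R : Type*} [Ring R] [StarRing R] {x a : R} (hx : star x = -x)
    (ha : IsSelfAdjoint a) : IsSelfAdjoint (x * a - a * x) := by
  simp only [IsSelfAdjoint, star_sub, star_mul, hx, ha.star_eq, mul_neg, neg_mul]
  abel

section Parseval

variable {𝕜 E : Type*} [RCLike 𝕜] [NormedAddCommGroup E] [InnerProductSpace 𝕜 E]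

theorem HilbertBasis.hasSum_norm_inner_sq (e : HilbertBasis ι 𝕜 E) (v : E) :
    HasSum (fun m => ‖(inner 𝕜 (e m) v : 𝕜)‖ ^ 2) (‖v‖ ^ 2) := by
  have hterm (m : ι) :
      RCLike.re (inner 𝕜 v (e m) * inner 𝕜 (e m) v) = ‖(inner 𝕜 (e m) v : 𝕜)‖ ^ 2 := by
    rw [← inner_conj_symm v (e m), RCLike.conj_mul, ← RCLike.ofReal_pow, RCLike.ofReal_re]
  simpa only [RCLike.reCLM_apply, hterm, inner_self_eq_norm_sq] using
    RCLike.reCLM.hasSum (e.hasSum_inner_mul_inner v v)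

theorem HilbertBasis.enorm_sq_eq_tsum (e : HilbertBasis ι 𝕜 E) (v : E) :
    ‖v‖ₑ ^ 2 = ∑' m, ‖(inner 𝕜 (e m) v : 𝕜)‖ₑ ^ 2 := by
  simp only [← ofReal_norm, ← ENNReal.ofReal_pow (norm_nonneg _)]
  rw [← (e.hasSum_norm_inner_sq v).tsum_eq,
    ENNReal.ofReal_tsum_of_nonneg (fun _ => by positivity) (e.hasSum_norm_inner_sq v).summable]

end Parseval

theorem enorm_sq_eq_sum_enorm_apply_sq {𝕜 E I : Type*} [RCLike 𝕜] [NormedAddCommGroup E]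
    [InnerProductSpace 𝕜 E] [CompleteSpace E] [Fintype I] {p : I → E →L[𝕜] E}
    (hp : CompleteOrthogonalIdempotents p) (hsa : ∀ i, IsSelfAdjoint (p i)) (u : E) :
    ‖u‖ₑ ^ 2 = ∑ i, ‖p i u‖ₑ ^ 2 := by
  have hinner : (inner 𝕜 u u : 𝕜) = ∑ i, inner 𝕜 (p i u) (p i u) := calc
    inner 𝕜 u u = inner 𝕜 u ((∑ i, p i) u) := by rw [hp.complete, one_apply_eq_self]
    _ = ∑ i, inner 𝕜 u (p i (p i u)) := by
      simp only [_root_.sum_apply, inner_sum, ← mul_apply_eq_comp, (hp.idem _).eq]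
    _ = ∑ i, inner 𝕜 (p i u) (p i u) := by
      simp only [← adjoint_inner_left, ← star_eq_adjoint, (hsa _).star_eq]
  have hreal : ‖u‖ ^ 2 = ∑ i, ‖p i u‖ ^ 2 := by
    simpa only [map_sum, inner_self_eq_norm_sq] using congrArg RCLike.re hinner
  simp only [← ofReal_norm, ← ENNReal.ofReal_pow (norm_nonneg _), hreal]
  exact ENNReal.ofReal_sum_of_nonneg fun _ _ => by positivity


section HilbertSchmidtNorm

variable {𝕜 E : Type*} [RCLike 𝕜] [NormedAddCommGroup E] [InnerProductSpace 𝕜 E]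
  (e : HilbertBasis ι 𝕜 E)

/-- The square of `hsNorm`, valued in `ℝ≥0∞` so that it needs no summability side condition. -/
noncomputable def hsNormSq (a : E →L[𝕜] E) : ℝ≥0∞ := ∑' k, ‖a (e k)‖ₑ ^ 2

theorem hsNormSq_eq_tsum_tsum (a : E →L[𝕜] E) :
    hsNormSq e a = ∑' k, ∑' m, ‖(inner 𝕜 (e m) (a (e k)) : 𝕜)‖ₑ ^ 2 := by
  simp only [hsNormSq, e.enorm_sq_eq_tsum]

@[simp]
theorem hsNormSq_zero : hsNormSq e 0 = 0 := by
  simp [hsNormSq]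

theorem hsNormSq_smul (c : 𝕜) (a : E →L[𝕜] E) : hsNormSq e (c • a) = ‖c‖ₑ ^ 2 * hsNormSq e a := by
  simp only [hsNormSq, ← ENNReal.tsum_mul_left, smul_apply, enorm_smul, mul_pow]

theorem hsNormSq_add_le (a b : E →L[𝕜] E) :
    hsNormSq e (a + b) ≤ 2 * (hsNormSq e a + hsNormSq e b) := by
  simp only [hsNormSq, ← ENNReal.tsum_add, ← ENNReal.tsum_mul_left]
  refine ENNReal.tsum_le_tsum fun k => ?_
  calc ‖(a + b) (e k)‖ₑ ^ 2 ≤ (‖a (e k)‖ₑ + ‖b (e k)‖ₑ) ^ 2 := by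
        gcongr; exact enorm_add_le _ _
    _ ≤ 2 * (‖a (e k)‖ₑ ^ 2 + ‖b (e k)‖ₑ ^ 2) := by
        simp only [enorm_eq_nnnorm]
        exact_mod_cast (add_sq_le : (‖a (e k)‖₊ + ‖b (e k)‖₊) ^ 2 ≤ _)

theorem hsNormSq_mul_le (b a : E →L[𝕜] E) : hsNormSq e (b * a) ≤ ‖b‖ₑ ^ 2 * hsNormSq e a := by
  simp only [hsNormSq, ← ENNReal.tsum_mul_left, ← mul_pow, mul_apply_eq_comp]
  exact ENNReal.tsum_le_tsum fun k => by gcongr; exact b.le_opENorm _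

variable [CompleteSpace E]

-- By Parseval both sides are `∑ k, ∑ m, |⟪e m, a (e k)⟫|²`, summed in opposite orders.
theorem hsNormSq_adjoint (a : E →L[𝕜] E) : hsNormSq e (adjoint a) = hsNormSq e a := by
  rw [hsNormSq_eq_tsum_tsum, hsNormSq_eq_tsum_tsum, ENNReal.tsum_comm]
  refine tsum_congr fun k => tsum_congr fun m => ?_
  rw [adjoint_inner_right, ← inner_conj_symm, RCLike.enorm_conj]

theorem hsNormSq_mul_le_right (a b : E →L[𝕜] E) : hsNormSq e (a * b) ≤ ‖b‖ₑ ^ 2 * hsNormSq e a := by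
  rw [← hsNormSq_adjoint, ← hsNormSq_adjoint e a, ← star_eq_adjoint, ← star_eq_adjoint, star_mul]
  calc hsNormSq e (star b * star a) ≤ ‖star b‖ₑ ^ 2 * hsNormSq e (star a) := hsNormSq_mul_le e _ _
    _ = ‖b‖ₑ ^ 2 * hsNormSq e (star a) := by
      rw [enorm_eq_nnnorm, enorm_eq_nnnorm, nnnorm_star b]

theorem enorm_apply_sq_le_hsNormSq_mul (a : E →L[𝕜] E) (v : E) :
    ‖a v‖ₑ ^ 2 ≤ hsNormSq e a * ‖v‖ₑ ^ 2 := by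
  rw [e.enorm_sq_eq_tsum, ← hsNormSq_adjoint, hsNormSq, ← ENNReal.tsum_mul_right]
  refine ENNReal.tsum_le_tsum fun m => ?_
  rw [← adjoint_inner_left, ← mul_pow]
  gcongr
  simp only [enorm_eq_nnnorm]
  exact_mod_cast nnnorm_inner_le_nnnorm _ _

variable {I : Type*} [Fintype I] {p : I → E →L[𝕜] E}

theorem hsNormSq_eq_sum_mul (hp : CompleteOrthogonalIdempotents p) (hsa : ∀ i, IsSelfAdjoint (p i))
    (a : E →L[𝕜] E) : hsNormSq e a = ∑ i, hsNormSq e (p i * a) := by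
  simp only [hsNormSq]
  rw [← Summable.tsum_finsetSum fun i _ => ENNReal.summable]
  exact tsum_congr fun k => enorm_sq_eq_sum_enorm_apply_sq hp hsa (a (e k))

theorem hsNormSq_eq_sum_mul_right (hp : CompleteOrthogonalIdempotents p)
    (hsa : ∀ i, IsSelfAdjoint (p i)) (a : E →L[𝕜] E) :
    hsNormSq e a = ∑ j, hsNormSq e (a * p j) := by
  rw [← hsNormSq_adjoint, hsNormSq_eq_sum_mul e hp hsa]
  refine Finset.sum_congr rfl fun j _ => ?_
  rw [← hsNormSq_adjoint e (a * p j), ← star_eq_adjoint, ← star_eq_adjoint, star_mul,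
    (hsa j).star_eq]

theorem hsNormSq_eq_sum_sum (hp : CompleteOrthogonalIdempotents p)
    (hsa : ∀ i, IsSelfAdjoint (p i)) (a : E →L[𝕜] E) :
    hsNormSq e a = ∑ i, ∑ j, hsNormSq e (p i * a * p j) := by
  rw [hsNormSq_eq_sum_mul e hp hsa]
  exact Finset.sum_congr rfl fun i _ => hsNormSq_eq_sum_mul_right e hp hsa _

theorem mul_hsNormSq_le_of_blocks (hp : CompleteOrthogonalIdempotents p)
    (hsa : ∀ i, IsSelfAdjoint (p i)) (c : ℝ≥0∞) {x y : E →L[𝕜] E}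
    (h : ∀ i j, c * hsNormSq e (p i * x * p j) ≤ hsNormSq e (p i * y * p j)) :
    c * hsNormSq e x ≤ hsNormSq e y := by
  rw [hsNormSq_eq_sum_sum e hp hsa x, hsNormSq_eq_sum_sum e hp hsa y, Finset.mul_sum]
  gcongr with i _
  rw [Finset.mul_sum]
  gcongr with j _
  exact h i j

theorem ofReal_sq_mul_hsNormSq_sub_sum_le [DecidableEq I] (hp : CompleteOrthogonalIdempotents p)
    (hsa : ∀ i, IsSelfAdjoint (p i)) (μ : I → 𝕜) {g : ℝ} (hg : ∀ i j, i ≠ j → g ≤ ‖μ i - μ j‖)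
    (x : E →L[𝕜] E) :
    ENNReal.ofReal g ^ 2 * hsNormSq e (x - ∑ i, p i * x * p i) ≤
      hsNormSq e (x * ∑ i, μ i • p i - (∑ i, μ i • p i) * x) := by
  refine mul_hsNormSq_le_of_blocks e hp hsa _ fun i j => ?_
  rw [hp.mul_commutator_mul, hsNormSq_smul, mul_sub, sub_mul, hp.mul_sum_mul_mul]
  obtain rfl | hij := eq_or_ne i j
  · simp
  · rw [if_neg hij, sub_zero, ← ofReal_norm]
    gcongr
    exact hg j i hij.symm

end HilbertSchmidtNorm

section IsHS

variable {e : HilbertBasis ι ℂ H}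

theorem re_inner_adjoint_mul_self_apply (a : H →L[ℂ] H) (v : H) :
    ((inner ℂ v ((adjoint a * a) v) : ℂ)).re = ‖a v‖ ^ 2 := by
  rw [mul_apply_eq_comp, adjoint_inner_right, inner_self_eq_norm_sq_to_K]
  norm_cast

theorem isHS_iff_hsNormSq_ne_top {a : H →L[ℂ] H} : IsHS e a ↔ hsNormSq e a ≠ ∞ := by
  simp only [IsHS, hsNormSq, re_inner_adjoint_mul_self_apply, ← ofReal_norm,
    ← ENNReal.ofReal_pow (norm_nonneg _)]
  refine ⟨Summable.tsum_ofReal_ne_top, fun h => ?_⟩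
  simpa using ENNReal.summable_toReal h

theorem hsNorm_eq_sqrt_toReal_hsNormSq (a : H →L[ℂ] H) :
    hsNorm e a = √(hsNormSq e a).toReal := by
  simp only [hsNorm, hsNormSq, re_inner_adjoint_mul_self_apply]
  rw [ENNReal.tsum_toReal_eq fun _ => by simp]
  simp

theorem norm_le_hsNorm {a : H →L[ℂ] H} (ha : IsHS e a) : ‖a‖ ≤ hsNorm e a := by
  rw [hsNorm_eq_sqrt_toReal_hsNormSq]
  refine a.opNorm_le_bound (Real.sqrt_nonneg _) fun v => ?_
  have h := ENNReal.toReal_mono (ENNReal.mul_ne_top (isHS_iff_hsNormSq_ne_top.1 ha) (by simp))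
    (enorm_apply_sq_le_hsNormSq_mul e a v)
  simp only [ENNReal.toReal_mul, ENNReal.toReal_pow, toReal_enorm] at h
  rw [← Real.sqrt_sq (norm_nonneg (a v)), ← Real.sqrt_sq (norm_nonneg v),
    ← Real.sqrt_mul ENNReal.toReal_nonneg]
  exact Real.sqrt_le_sqrt h

variable (e) in
def hilbertSchmidt : Submodule ℂ (H →L[ℂ] H) where
  carrier := {a | IsHS e a}
  zero_mem' := by simp [isHS_iff_hsNormSq_ne_top]
  add_mem' {a b} ha hb := by
    simp only [Set.mem_ofPred_eq, isHS_iff_hsNormSq_ne_top] at *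
    exact ne_top_of_le_ne_top (ENNReal.mul_ne_top (by simp) (ENNReal.add_ne_top.2 ⟨ha, hb⟩))
      (hsNormSq_add_le e a b)
  smul_mem' c a ha := by
    simp only [Set.mem_ofPred_eq, isHS_iff_hsNormSq_ne_top, hsNormSq_smul] at *
    exact ENNReal.mul_ne_top (by simp) ha

theorem IsHS.mul_left {a : H →L[ℂ] H} (ha : IsHS e a) (b : H →L[ℂ] H) : IsHS e (b * a) := by
  rw [isHS_iff_hsNormSq_ne_top] at *
  exact ne_top_of_le_ne_top (ENNReal.mul_ne_top (by simp) ha) (hsNormSq_mul_le e b a)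

theorem IsHS.mul_right {a : H →L[ℂ] H} (ha : IsHS e a) (b : H →L[ℂ] H) : IsHS e (a * b) := by
  rw [isHS_iff_hsNormSq_ne_top] at *
  exact ne_top_of_le_ne_top (ENNReal.mul_ne_top (by simp) ha) (hsNormSq_mul_le_right e a b)

theorem tendsto_of_tendsto_hsNorm_sub {α : Type*} {l : Filter α} {z : α → H →L[ℂ] H}
    {z₀ : H →L[ℂ] H} (hz : ∀ k, IsHS e (z k)) (hz₀ : IsHS e z₀)
    (h : Filter.Tendsto (fun k => hsNorm e (z k - z₀)) l (nhds 0)) :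
    Filter.Tendsto z l (nhds z₀) :=
  tendsto_iff_norm_sub_tendsto_zero.2 <| squeeze_zero (fun _ => norm_nonneg _)
    (fun k => norm_le_hsNorm ((hilbertSchmidt e).sub_mem (hz k) hz₀)) h

theorem mul_hsNorm_sub_sum_le {I : Type*} [Fintype I] [DecidableEq I] {p : I → H →L[ℂ] H}
    (hp : CompleteOrthogonalIdempotents p) (hsa : ∀ i, IsSelfAdjoint (p i)) (μ : I → ℂ) {g : ℝ}
    (hg₀ : 0 ≤ g) (hg : ∀ i j, i ≠ j → g ≤ ‖μ i - μ j‖) {x : H →L[ℂ] H} (hx : IsHS e x) :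
    g * hsNorm e (x - ∑ i, p i * x * p i) ≤
      hsNorm e (x * ∑ i, μ i • p i - (∑ i, μ i • p i) * x) := by
  have hw : hsNormSq e (x * ∑ i, μ i • p i - (∑ i, μ i • p i) * x) ≠ ∞ :=
    isHS_iff_hsNormSq_ne_top.1 <| (hilbertSchmidt e).sub_mem (hx.mul_right _) (hx.mul_left _)
  have h := ENNReal.toReal_mono hw (ofReal_sq_mul_hsNormSq_sub_sum_le e hp hsa μ hg x)
  rw [ENNReal.toReal_mul, ENNReal.toReal_pow, ENNReal.toReal_ofReal hg₀] at h
  rw [hsNorm_eq_sqrt_toReal_hsNormSq, hsNorm_eq_sqrt_toReal_hsNormSq, ← Real.sqrt_sq hg₀,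
    ← Real.sqrt_mul (sq_nonneg g)]
  exact Real.sqrt_le_sqrt h

end IsHS

theorem commutator_range_finite_spectrum_general
    (e : HilbertBasis ι ℂ H) (n : ℕ)
    (lam : Fin n → ℝ) (hlam : Function.Injective lam)
    (proj : Fin n → H →L[ℂ] H)
    (hsa : ∀ i, adjoint (proj i) = proj i)
    (horth : ∀ i j, i ≠ j → proj i * proj j = 0)
    (hsum : ∑ i, proj i = 1)
    (A : H →L[ℂ] H) (hAdef : A = ∑ i, ((lam i : ℂ)) • proj i) :
    ({w | ∃ x : H →L[ℂ] H, adjoint x = -x ∧ IsHS e x ∧ w = x * A - A * x} =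
      {z : H →L[ℂ] H | adjoint z = z ∧ IsHS e z ∧ ∀ i, proj i * z * proj i = 0}) ∧
    (∀ (zk : ℕ → H →L[ℂ] H) (z : H →L[ℂ] H),
      (∀ k, zk k ∈ {z : H →L[ℂ] H | adjoint z = z ∧ IsHS e z ∧ ∀ i, proj i * z * proj i = 0}) →
      adjoint z = z → IsHS e z →
      Filter.Tendsto (fun k => hsNorm e (zk k - z)) Filter.atTop (nhds 0) →
      z ∈ {z : H →L[ℂ] H | adjoint z = z ∧ IsHS e z ∧ ∀ i, proj i * z * proj i = 0}) ∧
    (∀ x : H →L[ℂ] H, adjoint x = -x → IsHS e x →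
      sInf {d : ℝ | ∃ i j, i ≠ j ∧ d = |lam i - lam j|} *
          hsNorm e (x - ∑ i, proj i * x * proj i) ≤
        hsNorm e (x * A - A * x)) := by
  have hp : CompleteOrthogonalIdempotents proj :=
    CompleteOrthogonalIdempotents.iff_ortho_complete.2 ⟨horth, hsum⟩
  have hpsa : ∀ i, IsSelfAdjoint (proj i) := fun i => isSelfAdjoint_iff'.2 (hsa i)
  have hlam_sa : ∀ i, IsSelfAdjoint (lam i : ℂ) := fun i => Complex.conj_ofReal _
  have hA : IsSelfAdjoint A := hAdef ▸ isSelfAdjoint_sum _ fun i _ => (hlam_sa i).smul (hpsa i)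
  subst hAdef
  refine ⟨Set.ext fun w => ⟨?_, ?_⟩, ?_, ?_⟩
  · rintro ⟨x, hx, hxHS, rfl⟩
    rw [← star_eq_adjoint] at hx
    refine ⟨isSelfAdjoint_iff'.1 (isSelfAdjoint_mul_sub_mul hx hA),
      (hilbertSchmidt e).sub_mem (hxHS.mul_right _) (hxHS.mul_left _), fun i => ?_⟩
    rw [hp.mul_commutator_mul, sub_self, zero_smul]
  · rintro ⟨hw, hwHS, hdiag⟩
    refine ⟨commutatorInv (fun i => (lam i : ℂ)) proj w, ?_, ?_,
      (commutatorInv_commutator hp (Complex.ofReal_injective.comp hlam) hdiag).symm⟩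
    · rw [← star_eq_adjoint]
      exact star_commutatorInv hlam_sa hpsa (isSelfAdjoint_iff'.2 hw)
    · exact (hilbertSchmidt e).sum_mem fun i _ => (hilbertSchmidt e).sum_mem fun j _ =>
        (hilbertSchmidt e).smul_mem _ ((hwHS.mul_left _).mul_right _)
  · intro zk z hzk hz hzHS hlim
    refine ⟨hz, hzHS, fun i => ?_⟩
    have hclosed : IsClosed {a : H →L[ℂ] H | proj i * a * proj i = 0} :=
      isClosed_eq (by fun_prop) continuous_const
    exact hclosed.mem_of_tendsto (tendsto_of_tendsto_hsNorm_sub (fun k => (hzk k).2.1) hzHS hlim)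
      (Filter.Eventually.of_forall fun k => (hzk k).2.2 i)
  · intro x _ hxHS
    refine mul_hsNorm_sub_sum_le hp hpsa _ (Real.sInf_nonneg ?_) (fun i j hij => ?_) hxHS
    · rintro d ⟨i, j, -, rfl⟩
      exact abs_nonneg _
    · rw [← Complex.ofReal_sub, Complex.norm_real, Real.norm_eq_abs]
      exact csInf_le ⟨0, by rintro d ⟨i, j, -, rfl⟩; exact abs_nonneg _⟩ ⟨i, j, hij, rfl⟩

theorem commutator_range_finite_spectrum
    (e : HilbertBasis ι ℂ H) (n : ℕ) (hn : 0 < n)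
    (lam : Fin n → ℝ) (hlam : Function.Injective lam)
    (proj : Fin n → H →L[ℂ] H)
    (hsa : ∀ i, adjoint (proj i) = proj i)
    (hidem : ∀ i, proj i * proj i = proj i)
    (horth : ∀ i j, i ≠ j → proj i * proj j = 0)
    (hsum : ∑ i, proj i = 1)
    (A : H →L[ℂ] H) (hAdef : A = ∑ i, ((lam i : ℂ)) • proj i) :
    ({w | ∃ x : H →L[ℂ] H, adjoint x = -x ∧ IsHS e x ∧ w = x * A - A * x} =
      {z : H →L[ℂ] H | adjoint z = z ∧ IsHS e z ∧ ∀ i, proj i * z * proj i = 0}) ∧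
    (∀ (zk : ℕ → H →L[ℂ] H) (z : H →L[ℂ] H),
      (∀ k, zk k ∈ {z : H →L[ℂ] H | adjoint z = z ∧ IsHS e z ∧ ∀ i, proj i * z * proj i = 0}) →
      adjoint z = z → IsHS e z →
      Filter.Tendsto (fun k => hsNorm e (zk k - z)) Filter.atTop (nhds 0) →
      z ∈ {z : H →L[ℂ] H | adjoint z = z ∧ IsHS e z ∧ ∀ i, proj i * z * proj i = 0}) ∧
    (∀ x : H →L[ℂ] H, adjoint x = -x → IsHS e x →
      sInf {d : ℝ | ∃ i j, i ≠ j ∧ d = |lam i - lam j|} *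
          hsNorm e (x - ∑ i, proj i * x * proj i) ≤
        hsNorm e (x * A - A * x)) :=
  commutator_range_finite_spectrum_general e n lam hlam proj hsa horth hsum A hAdef
end
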